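/- A group G endowed with a coarse structure 𝓔 is a right coarse group (𝓔 has a base of right invariant entourages, equivalently for every ε ∈ 𝓔 there is ε′ ∈ 𝓔 with B(x,ε)g ⊆ B(xg,ε′) for all x,g ∈ G) if and only if there exists a group bornology 𝓘 on G such that 𝓔 = 𝓔_𝓘, the coarse structure with base {ε_A = {(x,y) : y ∈ {x} ∪ Ax} : A ∈ 𝓘}. -/

import Mathlib

open Pointwise

def IsIdeal {X : Type*} (I : Set (Set X)) : Prop :=
  ∅ ∈ I ∧ (∀ A ∈ I, ∀ B : Set X, B ⊆ A → B ∈ I) ∧ (∀ A ∈ I, ∀ B ∈ I, A ∪ B ∈ I)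

def IsBornology {X : Type*} (B : Set (Set X)) : Prop :=
  IsIdeal B ∧ (∀ A : Set X, A.Finite → A ∈ B) ∧ ⋃₀ B = Set.univ

def IsGroupBornology {G : Type*} [Group G] (I : Set (Set G)) : Prop :=
  IsBornology I ∧ ∀ A ∈ I, ∀ B ∈ I, A * B⁻¹ ∈ I

def relComp {X : Type*} (ε δ : Set (X × X)) : Set (X × X) :=
  {p | ∃ y, (p.1, y) ∈ ε ∧ (y, p.2) ∈ δ}

def relInv {X : Type*} (ε : Set (X × X)) : Set (X × X) :=
  {p | (p.2, p.1) ∈ ε}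

def IsBallStructure {X : Type*} (E : Set (Set (X × X))) : Prop :=
  (∀ ε ∈ E, (SetRel.id : Set (X × X)) ⊆ ε) ∧
  (∀ ε ∈ E, ∀ δ ∈ E, ∃ lam ∈ E, relComp ε (relInv δ) ⊆ lam) ∧
  ⋃₀ E = Set.univ

def IsCoarseStructure {X : Type*} (E : Set (Set (X × X))) : Prop :=
  IsBallStructure E ∧
  ∀ ε ∈ E, ∀ δ : Set (X × X), (SetRel.id : Set (X × X)) ⊆ δ → δ ⊆ ε → δ ∈ E

def ball {X : Type*} (ε : Set (X × X)) (x : X) : Set X :=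
  {y | (x, y) ∈ ε}

def IsBoundedIn {X : Type*} (E : Set (Set (X × X))) (B : Set X) : Prop :=
  B = ∅ ∨ ∃ x : X, ∃ ε ∈ E, B ⊆ ball ε x

/-- The entourage `ε_A = {(x,y) : y ∈ {x} ∪ Ax}` determined by `A ⊆ G`. -/
def entOf {G : Type*} [Group G] (A : Set G) : Set (G × G) :=
  {p | p.2 = p.1 ∨ ∃ a ∈ A, p.2 = a * p.1}

/-- The coarse structure `𝓔_𝓘` on a group determined by a group bornology `𝓘`. -/
def EI {G : Type*} [Group G] (I : Set (Set G)) : Set (Set (G × G)) :=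
  {δ | (SetRel.id : Set (G × G)) ⊆ δ ∧ ∃ A ∈ I, δ ⊆ entOf A}

/-!
For a right coarse structure take `𝓘` to be the subsets of balls around `1`. Right invariance
gives `B(x, ε) x⁻¹ ⊆ B(1, ε')` and `B(1, ε) x ⊆ B(x, ε')`, so every entourage lies in some
`ε_A` with `A ∈ 𝓘` and every `ε_A` lies in an entourage; `A B⁻¹` is bounded because `a b⁻¹` is
joined to `1` through `b⁻¹`, after translating `1 ~ a` and `1 ~ b` by `b⁻¹`. Conversely every
`ε_A` is right invariant.
-/

section CoarseStructure

variable {X : Type*} {E : Set (Set (X × X))} {ε δ : Set (X × X)}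

lemma id_subset_relInv (hε : (SetRel.id : Set (X × X)) ⊆ ε) :
    (SetRel.id : Set (X × X)) ⊆ relInv ε :=
  fun p hp => hε (show p.2 = p.1 from (SetRel.mem_id.mp hp).symm)

lemma id_subset_relComp (hε : (SetRel.id : Set (X × X)) ⊆ ε)
    (hδ : (SetRel.id : Set (X × X)) ⊆ δ) : (SetRel.id : Set (X × X)) ⊆ relComp ε δ :=
  fun p hp => ⟨p.2, hε (show p.1 = p.2 from hp), hδ rfl⟩

lemma union_subset_relComp (hε : (SetRel.id : Set (X × X)) ⊆ ε)
    (hδ : (SetRel.id : Set (X × X)) ⊆ δ) : ε ∪ δ ⊆ relComp ε δ := by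
  rintro p (hp | hp)
  · exact ⟨p.2, hp, hδ rfl⟩
  · exact ⟨p.1, hε rfl, hp⟩

namespace IsCoarseStructure

variable (h : IsCoarseStructure E)
include h

lemma id_mem [Nonempty X] : (SetRel.id : Set (X × X)) ∈ E := by
  obtain ⟨x⟩ := ‹Nonempty X›
  obtain ⟨ε, hε, -⟩ : ((x, x) : X × X) ∈ ⋃₀ E := h.1.2.2 ▸ Set.mem_univ _
  exact h.2 ε hε _ subset_rfl (h.1.1 ε hε)

lemma relInv_mem [Nonempty X] (hδ : δ ∈ E) : relInv δ ∈ E := by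
  obtain ⟨lam, hlam, hsub⟩ := h.1.2.1 SetRel.id h.id_mem δ hδ
  exact h.2 lam hlam _ (id_subset_relInv (h.1.1 δ hδ)) fun p hp => hsub ⟨p.1, rfl, hp⟩

lemma relComp_mem [Nonempty X] (hε : ε ∈ E) (hδ : δ ∈ E) : relComp ε δ ∈ E := by
  obtain ⟨lam, hlam, hsub⟩ := h.1.2.1 ε hε (relInv δ) (h.relInv_mem hδ)
  exact h.2 lam hlam _ (id_subset_relComp (h.1.1 ε hε) (h.1.1 δ hδ)) hsub

lemma union_mem [Nonempty X] (hε : ε ∈ E) (hδ : δ ∈ E) : ε ∪ δ ∈ E :=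
  h.2 _ (h.relComp_mem hε hδ) _ (fun _ hp => Or.inl (h.1.1 ε hε hp))
    (union_subset_relComp (h.1.1 ε hε) (h.1.1 δ hδ))

end IsCoarseStructure

end CoarseStructure

lemma IsIdeal.mem_of_finite {X : Type*} {I : Set (Set X)} (hI : IsIdeal I)
    (hsingle : ∀ x : X, {x} ∈ I) {A : Set X} (hA : A.Finite) : A ∈ I := by
  induction A, hA using Set.Finite.induction_on with
  | empty => exact hI.1
  | insert _ _ ih => exact hI.2.2 _ (hsingle _) _ ih

section RightCoarse

variable {G : Type*} [Group G]

def IsRightCoarse (𝓔 : Set (Set (G × G))) : Prop :=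
  ∀ ε ∈ 𝓔, ∃ ε' ∈ 𝓔, ∀ x g y : G, y ∈ ball ε x → y * g ∈ ball ε' (x * g)

lemma id_subset_entOf (A : Set G) : (SetRel.id : Set (G × G)) ⊆ entOf A :=
  fun p hp => Or.inl (show p.1 = p.2 from hp).symm

lemma entOf_mem_EI {I : Set (Set G)} {A : Set G} (hA : A ∈ I) : entOf A ∈ EI I :=
  ⟨id_subset_entOf A, A, hA, subset_rfl⟩

lemma mul_right_mem_entOf {A : Set G} {x y : G} (hxy : (x, y) ∈ entOf A) (g : G) :
    (x * g, y * g) ∈ entOf A := by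
  rcases hxy with hyx | ⟨a, ha, hy⟩
  · exact Or.inl (congrArg (· * g) hyx)
  · exact Or.inr ⟨a, ha, show y * g = a * (x * g) by rw [show y = a * x from hy, mul_assoc]⟩

lemma isRightCoarse_EI (I : Set (Set G)) : IsRightCoarse (EI I) := by
  rintro ε ⟨-, A, hA, hεA⟩
  exact ⟨entOf A, entOf_mem_EI hA, fun x g y hy => mul_right_mem_entOf (hεA hy) g⟩

def ballBornology (𝓔 : Set (Set (G × G))) : Set (Set G) :=
  {A | ∃ ε ∈ 𝓔, A ⊆ ball ε 1}

variable {𝓔 : Set (Set (G × G))} (h : IsCoarseStructure 𝓔) (H : IsRightCoarse 𝓔)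
include h

lemma singleton_mem_ballBornology (x : G) : {x} ∈ ballBornology 𝓔 := by
  obtain ⟨ε, hε, hx⟩ : ((1 : G), x) ∈ ⋃₀ 𝓔 := h.1.2.2 ▸ Set.mem_univ _
  exact ⟨ε, hε, Set.singleton_subset_iff.mpr hx⟩

lemma isIdeal_ballBornology : IsIdeal (ballBornology 𝓔) := by
  refine ⟨⟨_, h.id_mem, Set.empty_subset _⟩, ?_, ?_⟩
  · rintro A ⟨ε, hε, hA⟩ B hBA
    exact ⟨ε, hε, hBA.trans hA⟩
  · rintro A ⟨ε, hε, hA⟩ B ⟨δ, hδ, hB⟩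
    exact ⟨ε ∪ δ, h.union_mem hε hδ, Set.union_subset_union hA hB⟩

include H

lemma mul_inv_mem_ballBornology {A B : Set G} (hA : A ∈ ballBornology 𝓔)
    (hB : B ∈ ballBornology 𝓔) : A * B⁻¹ ∈ ballBornology 𝓔 := by
  obtain ⟨ε, hε, hAε⟩ := hA
  obtain ⟨δ, hδ, hBδ⟩ := hB
  obtain ⟨ε', hε', Hε⟩ := H ε hε
  obtain ⟨δ', hδ', Hδ⟩ := H δ hδ
  refine ⟨relComp (relInv δ') ε', h.relComp_mem (h.relInv_mem hδ') hε', ?_⟩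
  rintro _ ⟨a, ha, b, hb, rfl⟩
  refine ⟨b, ?_, ?_⟩
  · simpa [ball, relInv] using Hδ 1 b _ (hBδ (Set.mem_inv.mp hb))
  · simpa [ball] using Hε 1 b a (hAε ha)

lemma isGroupBornology_ballBornology : IsGroupBornology (ballBornology 𝓔) :=
  ⟨⟨isIdeal_ballBornology h, fun _ hA => (isIdeal_ballBornology h).mem_of_finite
      (singleton_mem_ballBornology h) hA,
    Set.eq_univ_of_forall fun x => ⟨{x}, singleton_mem_ballBornology h x, rfl⟩⟩,
    fun _ hA _ hB => mul_inv_mem_ballBornology h H hA hB⟩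

lemma eq_EI_ballBornology : 𝓔 = EI (ballBornology 𝓔) := by
  ext ε
  constructor
  · intro hε
    obtain ⟨ε', hε', Hε⟩ := H ε hε
    refine ⟨h.1.1 ε hε, ball ε' 1, ⟨ε', hε', subset_rfl⟩, ?_⟩
    rintro ⟨x, y⟩ hxy
    exact Or.inr ⟨y * x⁻¹, by simpa using Hε x x⁻¹ y hxy, by simp⟩
  · rintro ⟨hid, A, ⟨δ, hδ, hAδ⟩, hεA⟩
    obtain ⟨δ', hδ', Hδ⟩ := H δ hδ
    refine h.2 δ' hδ' ε hid ?_
    rintro ⟨x, y⟩ hxy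
    obtain hyx | ⟨a, ha, hy⟩ : y = x ∨ ∃ a ∈ A, y = a * x := hεA hxy
    · exact h.1.1 δ' hδ' hyx.symm
    · simpa [ball, hy] using Hδ 1 x a (hAδ ha)

end RightCoarse

theorem stmt13 {G : Type*} [Group G] (𝓔 : Set (Set (G × G)))
    (h : IsCoarseStructure 𝓔) :
    (∀ ε ∈ 𝓔, ∃ ε' ∈ 𝓔, ∀ x g y : G, y ∈ ball ε x → y * g ∈ ball ε' (x * g)) ↔
      ∃ 𝓘 : Set (Set G), IsGroupBornology 𝓘 ∧ 𝓔 = EI 𝓘 := by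
  constructor
  · intro H
    exact ⟨ballBornology 𝓔, isGroupBornology_ballBornology h H, eq_EI_ballBornology h H⟩
  · rintro ⟨𝓘, -, rfl⟩
    exact isRightCoarse_EI 𝓘
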